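/- Every piecewise testable language is recognizable by a C-RASP program without positional relations. In particular, for any word a₁a₂…a_n ∈ Σⁿ, the language Σ*a₁Σ*a₂Σ*…Σ*a_nΣ* (words containing a₁,…,a_n as a not-necessarily-contiguous subsequence in order) is C-RASP-recognizable, and the class of C-RASP-recognizable languages is closed under Boolean operations. -/

import Mathlib

mutual
/-- Syntax of C-RASP programs without positional relations: Boolean-valued
operations. A program (a sequence of operations, each possibly referring to
earlier ones) is represented by the expression tree of its final
Boolean-valued operation. -/
inductive BExpr (α : Type) : Type
  | tok : α → BExpr α                      -- initial operation `Q_σ(i)`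
  | not : BExpr α → BExpr α                -- Boolean negation
  | and : BExpr α → BExpr α → BExpr α      -- Boolean conjunction
  | top : BExpr α                          -- constant ⊤
  | le  : CExpr α → CExpr α → BExpr α      -- comparison `C₁(i) ≤ C₂(i)`
/-- Count-valued C-RASP operations. -/
inductive CExpr (α : Type) : Type
  | count : BExpr α → CExpr α              -- `#{j ≤ i : P(j)}`
  | cond  : BExpr α → CExpr α → CExpr α → CExpr α  -- conditional
  | add : CExpr α → CExpr α → CExpr α      -- addition
  | sub : CExpr α → CExpr α → CExpr α      -- subtraction
  | one : CExpr α                          -- constant 1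
end

mutual
/-- Evaluation of a Boolean-valued C-RASP operation on word `w` at
(0-based) position `i`. -/
def BExpr.eval {α : Type} [DecidableEq α] (w : List α) : BExpr α → ℕ → Bool
  | .tok σ, i => decide (w[i]? = some σ)
  | .not b, i => ! b.eval w i
  | .and b₁ b₂, i => b₁.eval w i && b₂.eval w i
  | .top, _ => true
  | .le c₁ c₂, i => decide (c₁.eval w i ≤ c₂.eval w i)
/-- Evaluation of a count-valued C-RASP operation on word `w` at position `i`. -/
def CExpr.eval {α : Type} [DecidableEq α] (w : List α) : CExpr α → ℕ → ℤ
  | .count b, i => ((List.range (i + 1)).countP (fun j => b.eval w j) : ℤ)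
  | .cond b c₁ c₂, i => if b.eval w i then c₁.eval w i else c₂.eval w i
  | .add c₁ c₂, i => c₁.eval w i + c₂.eval w i
  | .sub c₁ c₂, i => c₁.eval w i - c₂.eval w i
  | .one, _ => 1
end

/-- A C-RASP program accepts a word iff its final Boolean-valued operation is
true at the last position of the word. -/
def BExpr.accepts {α : Type} [DecidableEq α] (P : BExpr α) (w : List α) : Prop :=
  P.eval w (w.length - 1) = true

/-- Piecewise testable languages: the Boolean closure of the scattered
subsequence languages `Σ* a₁ Σ* a₂ Σ* … Σ* aₙ Σ*`. -/
inductive PiecewiseTestable {α : Type} : (List α → Prop) → Prop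
  | basic (pat : List α) : PiecewiseTestable (fun w => pat.Sublist w)
  | compl {L : List α → Prop} :
      PiecewiseTestable L → PiecewiseTestable (fun w => ¬ L w)
  | inter {L₁ L₂ : List α → Prop} :
      PiecewiseTestable L₁ → PiecewiseTestable L₂ →
        PiecewiseTestable (fun w => L₁ w ∧ L₂ w)

/-! The program `sublistBefore [aₙ, …, a₁]` holds at position `i` iff `a₁ ⋯ aₙ` is a
subsequence of the first `i` letters: `aₙ` must occur at some `j < i` at which
`sublistBefore [aₙ₋₁, …, a₁]` holds. "Some earlier position satisfies `b`" is the count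
comparison `1 + [b i] ≤ #{j ≤ i : b j}`, so no positional relation is needed. -/

namespace List

variable {α : Type}

theorem append_singleton_sublist_append_singleton_iff {s l : List α} {a b : α} :
    s ++ [a] <+ l ++ [b] ↔ s ++ [a] <+ l ∨ (a = b ∧ s <+ l) := by
  rw [← reverse_sublist, reverse_concat, reverse_concat, sublist_cons_iff, ← reverse_concat,
    reverse_sublist]
  simp [eq_comm]

theorem append_singleton_sublist_take_iff {s w : List α} {a : α} {n : ℕ} :
    s ++ [a] <+ w.take n ↔ ∃ j < n, w[j]? = some a ∧ s <+ w.take j := by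
  induction n with
  | zero => simp
  | succ n ih =>
    rw [take_add_one, Nat.exists_lt_succ_right, ← ih]
    cases h : w[n]? with
    | none => simp
    | some b =>
      rw [Option.toList_some, append_singleton_sublist_append_singleton_iff, Option.some_inj,
        @eq_comm _ b]

end List

namespace BExpr

variable {α : Type} [DecidableEq α]

def existsLE (b : BExpr α) : BExpr α := .le .one (.count b)

def existsLT (b : BExpr α) : BExpr α := .le (.cond b (.add .one .one) .one) (.count b)

theorem eval_existsLE {b : BExpr α} {w : List α} {i : ℕ} :
    b.existsLE.eval w i = true ↔ ∃ j < i + 1, b.eval w j = true := by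
  simp [existsLE, BExpr.eval, CExpr.eval]

theorem eval_existsLT {b : BExpr α} {w : List α} {i : ℕ} :
    b.existsLT.eval w i = true ↔ ∃ j < i, b.eval w j = true := by
  have hpos :
      (∃ j < i, b.eval w j = true) ↔ 0 < (List.range i).countP (fun j => b.eval w j) := by
    simp [List.countP_pos_iff]
  simp only [existsLT, BExpr.eval, CExpr.eval, List.range_succ, List.countP_append, hpos]
  cases h : b.eval w i <;>
    simp only [h, List.countP_singleton, if_true, if_false, Bool.false_eq_true,
      decide_eq_true_eq] <;>
    omega

def sublistBefore : List α → BExpr α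
  | [] => .top
  | a :: r => existsLT (.and (.tok a) (sublistBefore r))

def sublistUpTo : List α → BExpr α
  | [] => .top
  | a :: r => existsLE (.and (.tok a) (sublistBefore r))

theorem eval_sublistBefore (r w : List α) (i : ℕ) :
    (sublistBefore r).eval w i = true ↔ r.reverse.Sublist (w.take i) := by
  induction r generalizing i with
  | nil => simp [sublistBefore, BExpr.eval]
  | cons a r ih =>
    simp [sublistBefore, eval_existsLT, BExpr.eval, ih, List.append_singleton_sublist_take_iff]

theorem eval_sublistUpTo (r w : List α) (i : ℕ) :
    (sublistUpTo r).eval w i = true ↔ r.reverse.Sublist (w.take (i + 1)) := by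
  cases r with
  | nil => simp [sublistUpTo, BExpr.eval]
  | cons a r =>
    simp [sublistUpTo, eval_existsLE, BExpr.eval, eval_sublistBefore,
      List.append_singleton_sublist_take_iff]

theorem accepts_sublistUpTo_reverse (pat w : List α) :
    (sublistUpTo pat.reverse).accepts w ↔ pat.Sublist w := by
  rw [accepts, eval_sublistUpTo, List.reverse_reverse, List.take_of_length_le (by omega)]

@[simp]
theorem accepts_not {P : BExpr α} {w : List α} : P.not.accepts w ↔ ¬ P.accepts w := by
  simp [accepts, BExpr.eval]

@[simp]
theorem accepts_and {P₁ P₂ : BExpr α} {w : List α} :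
    (P₁.and P₂).accepts w ↔ P₁.accepts w ∧ P₂.accepts w := by
  simp [accepts, BExpr.eval]

end BExpr

theorem PiecewiseTestable.exists_bExpr_accepts_iff {α : Type} [DecidableEq α]
    {L : List α → Prop} (hL : PiecewiseTestable L) : ∃ P : BExpr α, ∀ w, P.accepts w ↔ L w := by
  induction hL with
  | basic pat => exact ⟨.sublistUpTo pat.reverse, BExpr.accepts_sublistUpTo_reverse pat⟩
  | compl _ ih =>
    obtain ⟨P, hP⟩ := ih
    exact ⟨P.not, fun w => by rw [BExpr.accepts_not, hP]⟩
  | inter _ _ ih₁ ih₂ =>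
    obtain ⟨P₁, hP₁⟩ := ih₁
    obtain ⟨P₂, hP₂⟩ := ih₂
    exact ⟨P₁.and P₂, fun w => by rw [BExpr.accepts_and, hP₁, hP₂]⟩

/-- Every piecewise testable language is C-RASP recognizable; in particular,
each subsequence language `Σ*a₁Σ*…Σ*aₙΣ*` is recognizable, and the class of
C-RASP-recognizable languages is closed under Boolean operations. -/
theorem stmt14 {α : Type} [DecidableEq α] :
    (∀ L : List α → Prop, PiecewiseTestable L →
      ∃ P : BExpr α, ∀ w : List α, P.accepts w ↔ L w) ∧
    (∀ pat : List α, ∃ P : BExpr α, ∀ w : List α, P.accepts w ↔ pat.Sublist w) ∧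
    (∀ P₁ P₂ : BExpr α,
      (∃ P : BExpr α, ∀ w : List α, P.accepts w ↔ ¬ P₁.accepts w) ∧
      (∃ P : BExpr α, ∀ w : List α, P.accepts w ↔ (P₁.accepts w ∧ P₂.accepts w))) :=
  ⟨fun _ hL => hL.exists_bExpr_accepts_iff,
    fun pat => ⟨.sublistUpTo pat.reverse, BExpr.accepts_sublistUpTo_reverse pat⟩,
    fun P₁ P₂ =>
      ⟨⟨P₁.not, fun _ => BExpr.accepts_not⟩, ⟨P₁.and P₂, fun _ => BExpr.accepts_and⟩⟩⟩
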